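/- Let G be a locally compact abelian group with an open compact subgroup H and A an automorphism of G with H ⊆ A(H). Then ⋃_{n≥0} A^n(H) = G if and only if ⋂_{n≤0} (A*)^n(H^⊥) = {0}. -/

import Mathlib

/-!
The union `U = ⋃ₙ Aⁿ(H)` is increasing because `H ⊆ A(H)`, so it is a subgroup, and it is open
since it contains `H`. A character lies in `(A*)⁻ⁿ(H^⊥)` exactly when it is trivial on `Aⁿ(H)`,
so the intersection is the annihilator of `U`. Finally an open subgroup `U` is all of `G` iff its
annihilator is trivial: a point outside `U` gives a nontrivial element of the discrete group
`G ⧸ U`, which a homomorphism `G ⧸ U → ℚ/ℤ ↪ 𝕋` detects, and characters trivial on an open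
subgroup are automatically continuous.
-/

open Real

namespace AddCircle

noncomputable def ratToCircle : AddCircle (1 : ℚ) →+ Additive Circle :=
  QuotientAddGroup.lift _
    (Circle.expHom.comp ((AddMonoidHom.mulLeft (2 * π)).comp (Rat.castHom ℝ).toAddMonoidHom))
    (AddSubgroup.zmultiples_le.mpr (by simp))

theorem ratToCircle_injective : Function.Injective ratToCircle := by
  refine (injective_iff_map_eq_zero _).mpr fun a ha => ?_
  induction a using QuotientAddGroup.induction_on with
  | H q =>
    obtain ⟨n, hn⟩ := Circle.exp_eq_one.mp (show Circle.exp (2 * π * q) = 1 from ha)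
    have hq : q = n := by
      exact_mod_cast mul_left_cancel₀ two_pi_pos.ne' (hn.trans (mul_comm _ _))
    exact (coe_eq_zero_iff _).mpr ⟨n, by simp [hq]⟩

end AddCircle

theorem CommGroup.exists_monoidHom_circle_apply_ne_one {M : Type*} [CommGroup M] {m : M}
    (hm : m ≠ 1) : ∃ φ : M →* Circle, φ m ≠ 1 := by
  obtain ⟨c, hc⟩ := CharacterModule.exists_character_apply_ne_zero_of_ne_zero
    (show Additive.ofMul m ≠ 0 from hm)
  exact ⟨MonoidHom.toAdditive.symm (AddCircle.ratToCircle.comp c),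
    fun h => hc <| AddCircle.ratToCircle_injective <| by rw [map_zero]; exact h⟩

theorem MonoidHom.continuous_of_le_ker {G M : Type*} [Group G] [TopologicalSpace G]
    [IsTopologicalGroup G] [Monoid M] [TopologicalSpace M] [ContinuousMul M] (f : G →* M)
    {U : Subgroup G} (hU : IsOpen (U : Set G)) (hUf : U ≤ f.ker) : Continuous f :=
  continuous_of_continuousAt_one f <| (continuousAt_const (y := (1 : M))).congr <|
    Filter.eventually_of_mem (hU.mem_nhds U.one_mem) fun _ hu => (hUf hu).symm

theorem Set.monotone_iterate_image {α : Type*} {f : α → α} {s : Set α} (h : s ⊆ f '' s) :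
    Monotone fun n => f^[n] '' s :=
  monotone_nat_of_le_succ fun n => by
    rw [Function.iterate_succ, Set.image_comp]
    exact Set.image_mono h

theorem Subgroup.coe_map_pow {G : Type*} [Group G] (H : Subgroup G) (f : Monoid.End G) (n : ℕ) :
    (H.map (f ^ n) : Set G) = (⇑f)^[n] '' H :=
  H.coe_map (f ^ n)

theorem Subgroup.coe_iSup_map_pow {G : Type*} [Group G] {H : Subgroup G} {f : Monoid.End G}
    (h : (H : Set G) ⊆ f '' H) :
    ((⨆ n : ℕ, H.map (f ^ n) : Subgroup G) : Set G) = ⋃ n : ℕ, (⇑f)^[n] '' H := by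
  have hmono : Monotone fun n : ℕ => H.map (f ^ n) := fun m n hmn => by
    rw [← SetLike.coe_subset_coe, H.coe_map_pow, H.coe_map_pow]
    exact Set.monotone_iterate_image h hmn
  rw [coe_iSup_of_directed hmono.directed_le]
  simp only [H.coe_map_pow]

section

variable {G : Type*} [CommGroup G] [TopologicalSpace G] [IsTopologicalGroup G]

theorem PontryaginDual.exists_trivialOn_apply_ne_one_of_notMem {U : Subgroup G}
    (hU : IsOpen (U : Set G)) {x : G} (hx : x ∉ U) :
    ∃ χ : PontryaginDual G, (∀ u ∈ U, χ u = 1) ∧ χ x ≠ 1 := by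
  obtain ⟨φ, hφ⟩ := CommGroup.exists_monoidHom_circle_apply_ne_one
    (show (x : G ⧸ U) ≠ 1 from mt (QuotientGroup.eq_one_iff x).mp hx)
  have hker : U ≤ (φ.comp (QuotientGroup.mk' U)).ker := fun u hu => by
    simp [(QuotientGroup.eq_one_iff u).mpr hu]
  exact ⟨⟨_, (φ.comp (QuotientGroup.mk' U)).continuous_of_le_ker hU hker⟩, fun u hu => hker hu, hφ⟩

theorem Subgroup.eq_top_iff_annihilator_eq_one {U : Subgroup G} (hU : IsOpen (U : Set G)) :
    U = ⊤ ↔ {χ : PontryaginDual G | ∀ u ∈ U, χ u = 1} = {1} := by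
  refine ⟨?_, fun h => eq_top_iff.mpr fun x _ => ?_⟩
  · rintro rfl
    ext χ
    simp only [mem_top, forall_const, Set.mem_ofPred_eq, Set.mem_singleton_iff]
    exact ⟨fun hχ => ContinuousMonoidHom.ext hχ, fun hχ x => hχ ▸ rfl⟩
  · by_contra hx
    obtain ⟨χ, hχU, hχx⟩ := PontryaginDual.exists_trivialOn_apply_ne_one_of_notMem hU hx
    exact hχx (((Set.ext_iff.mp h χ).mp hχU : χ = 1) ▸ rfl)

theorem PontryaginDual.exists_annihilator_comp_iterate_symm_iff {H : Subgroup G}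
    (hH : IsOpen (H : Set G)) (A : G ≃* G) (n : ℕ) (χ : PontryaginDual G) :
    (∃ ξ : PontryaginDual G, (∀ h ∈ H, ξ h = 1) ∧ ∀ x, χ x = ξ ((⇑A.symm)^[n] x)) ↔
      ∀ h ∈ H, χ ((⇑A)^[n] h) = 1 := by
  constructor
  · rintro ⟨ξ, hξH, hξ⟩ h hh
    rw [hξ, Function.LeftInverse.iterate A.symm_apply_apply n, hξH h hh]
  · intro hχ
    -- typed as `Monoid.End G` so that `f ^ n` is composition rather than the pointwise power
    let f : Monoid.End G := A.toMonoidHom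
    let ξ : G →* Circle := χ.toMonoidHom.comp (f ^ n)
    have hker : H ≤ ξ.ker := fun h hh => ξ.mem_ker.mpr (hχ h hh)
    refine ⟨⟨ξ, ξ.continuous_of_le_ker hH hker⟩, fun h hh => hker hh, fun x => ?_⟩
    change χ x = χ ((⇑A)^[n] ((⇑A.symm)^[n] x))
    rw [Function.LeftInverse.iterate A.apply_symm_apply n]

end

theorem iUnion_eq_univ_iff_iInter_adjoint_annihilator_trivial_general
    {G : Type*} [CommGroup G] [TopologicalSpace G] [IsTopologicalGroup G]
    (H : Subgroup G) (hHopen : IsOpen (H : Set G))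
    (A : G ≃* G)
    (hHA : (H : Set G) ⊆ ⇑A '' (H : Set G)) :
    (⋃ n : ℕ, (⇑A)^[n] '' (H : Set G)) = Set.univ ↔
      (⋂ n : ℕ, {χ : PontryaginDual G |
          ∃ ξ : PontryaginDual G, (∀ h ∈ H, ξ h = 1) ∧
            ∀ x : G, χ x = ξ ((⇑A.symm)^[n] x)})
        = {(1 : PontryaginDual G)} := by
  let f : Monoid.End G := A.toMonoidHom
  set U : Subgroup G := ⨆ n : ℕ, H.map (f ^ n)
  have hU : (U : Set G) = ⋃ n : ℕ, (⇑A)^[n] '' H := Subgroup.coe_iSup_map_pow hHA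
  have hUopen : IsOpen (U : Set G) :=
    Subgroup.isOpen_mono (SetLike.coe_subset_coe.mp (hU ▸ Set.subset_iUnion_of_subset 0 (by simp)))
      hHopen
  rw [← hU, Subgroup.coe_eq_univ, Subgroup.eq_top_iff_annihilator_eq_one hUopen]
  congr! 1
  ext χ
  simp only [Set.mem_iInter, Set.mem_ofPred_eq,
    PontryaginDual.exists_annihilator_comp_iterate_symm_iff hHopen]
  change (U : Set G) ⊆ {u | χ u = 1} ↔ _
  simp only [hU, Set.iUnion_subset_iff, Set.image_subset_iff]
  rfl

/-- Let `G` be a locally compact abelian group with an open compact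
subgroup `H` and `A` an automorphism of `G` with `H ⊆ A(H)`.  Then
`⋃_{n ≥ 0} A^n(H) = G` if and only if `⋂_{n ≤ 0} (A*)^n(H^⊥) = {0}`, where `A*` is the
adjoint automorphism of `Ĝ` (so `(A*)^{-n} ξ = ξ ∘ A⁻ⁿ = ξ ∘ (A⁻¹)ⁿ`), `H^⊥` is the
annihilator of `H`, and `0` denotes the trivial character. -/
theorem iUnion_eq_univ_iff_iInter_adjoint_annihilator_trivial
    {G : Type*} [CommGroup G] [TopologicalSpace G] [IsTopologicalGroup G]
    [LocallyCompactSpace G]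
    (H : Subgroup G) (hHopen : IsOpen (H : Set G)) (hHcpt : IsCompact (H : Set G))
    (A : G ≃* G) (hA : Continuous A) (hA' : Continuous A.symm)
    (hHA : (H : Set G) ⊆ ⇑A '' (H : Set G)) :
    (⋃ n : ℕ, (⇑A)^[n] '' (H : Set G)) = Set.univ ↔
      (⋂ n : ℕ, {χ : PontryaginDual G |
          ∃ ξ : PontryaginDual G, (∀ h ∈ H, ξ h = 1) ∧
            ∀ x : G, χ x = ξ ((⇑A.symm)^[n] x)})
        = {(1 : PontryaginDual G)} :=
  iUnion_eq_univ_iff_iInter_adjoint_annihilator_trivial_general H hHopen A hHA
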